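/- Let d ≥ 1, α ∈ (0,1) and T > 0. Let h : [0,T] × ℝ^d → ℝ be such that for each s ∈ [0,T] the function h(s,·) is bounded and differentiable with ∇h(s,·) bounded and α-Hölder, the map s ↦ h(s,·) is continuous in the norm ‖f‖_{C^{1+α}} := ‖f‖_∞ + ‖∇f‖_∞ + [∇f]_α, and M := sup_{s ∈ [0,T]} ‖h(s,·)‖_{C^{1+α}} < ∞. Define v(t,x) = ∫_t^T (P_{s−t} h(s,·))(x) ds. Then v(t,·) is bounded and differentiable with ∇v(t,·) bounded and α-Hölder for each t, and sup_{t ∈ [0,T]} ‖v(t,·)‖_{C^{1+α}} ≤ c T M for a constant c depending only on d, α, T. -/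

import Mathlib

/-!
The heat semigroup is convolution with a probability density, so it increases neither the sup
norm of a function, nor that of its gradient (differentiation commutes with the convolution), nor
the Hölder seminorm of the gradient. Integrating in `s` over `[t, T]` multiplies these three bounds
by `T - t ≤ T`; continuity of `s ↦ h(s,·)` provides the measurability in `s` needed to
differentiate under the integral sign. Hence `c = 3` works.
-/

open MeasureTheory

/-- The heat kernel `p_t(x) = (2πt)^{-d/2} exp(-‖x‖²/(2t))` on `ℝ^d`. -/
noncomputable def heatKernel (d : ℕ) (t : ℝ) (x : EuclideanSpace ℝ (Fin d)) : ℝ :=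
  (2 * Real.pi * t) ^ (-(d : ℝ) / 2) * Real.exp (-‖x‖ ^ 2 / (2 * t))

/-- The heat semigroup `P_t h (x) = ∫ p_t(x-y) h(y) dy` for `t > 0`, with `P_0 h = h`. -/
noncomputable def heatSemigroup (d : ℕ) (t : ℝ) (h : EuclideanSpace ℝ (Fin d) → ℝ)
    (x : EuclideanSpace ℝ (Fin d)) : ℝ :=
  if t = 0 then h x else ∫ y, heatKernel d t (x - y) * h y

/-- The supremum norm `‖g‖_∞ = ⨆ x, ‖g x‖` of a function. -/
noncomputable def supNorm {E F : Type*} [NormedAddCommGroup F] (g : E → F) : ℝ :=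
  ⨆ x, ‖g x‖

/-- The `γ`-Hölder seminorm `[g]_γ = sup_{x ≠ y} ‖g x - g y‖ / ‖x - y‖^γ`. -/
noncomputable def holderSem {E F : Type*} [NormedAddCommGroup E] [NormedAddCommGroup F]
    (γ : ℝ) (g : E → F) : ℝ :=
  sSup {r : ℝ | ∃ x y : E, x ≠ y ∧ r = ‖g x - g y‖ / ‖x - y‖ ^ γ}

/-- The `C^{1+α}` norm `‖f‖_{C^{1+α}} = ‖f‖_∞ + ‖∇f‖_∞ + [∇f]_α`. -/
noncomputable def c1aNorm (d : ℕ) (α : ℝ) (f : EuclideanSpace ℝ (Fin d) → ℝ) : ℝ :=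
  supNorm f + supNorm (gradient f) + holderSem α (gradient f)

open Filter Topology Set

section HeatKernel

variable {d : ℕ}

lemma heatKernel_nonneg {u : ℝ} (hu : 0 < u) (x : EuclideanSpace ℝ (Fin d)) :
    0 ≤ heatKernel d u x := by
  have : 0 < 2 * Real.pi * u := by positivity
  unfold heatKernel
  positivity

lemma continuous_heatKernel (u : ℝ) : Continuous (heatKernel d u) := by
  unfold heatKernel
  fun_prop

lemma continuousAt_heatKernel_time {u₀ : ℝ} (hu₀ : 0 < u₀) (x : EuclideanSpace ℝ (Fin d)) :
    ContinuousAt (fun u => heatKernel d u x) u₀ := by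
  unfold heatKernel
  refine ContinuousAt.mul ?_ ?_
  · exact (Real.continuousAt_rpow_const _ _ (Or.inl (by positivity))).comp (by fun_prop)
  · exact Real.continuous_exp.continuousAt.comp
      (continuousAt_const.div (by fun_prop) (by positivity))

lemma heatKernel_eq_gaussian (u : ℝ) (x : EuclideanSpace ℝ (Fin d)) :
    heatKernel d u x = (2 * Real.pi * u) ^ (-(d : ℝ) / 2) * Real.exp (-(2 * u)⁻¹ * ‖x‖ ^ 2) := by
  unfold heatKernel
  congr 2
  ring

lemma integrable_heatKernel {u : ℝ} (hu : 0 < u) : Integrable (heatKernel d u) := by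
  have hb : 0 < ((2 * u)⁻¹ : ℂ).re := by norm_cast; positivity
  have hG := (GaussianFourier.integrable_cexp_neg_mul_sq_norm_add
    (V := EuclideanSpace ℝ (Fin d)) hb 0 0).norm
  rw [funext (heatKernel_eq_gaussian u)]
  refine (hG.congr (Eventually.of_forall fun x => ?_)).const_mul _
  simp only [zero_mul, add_zero, Complex.norm_exp]
  norm_cast

lemma integral_heatKernel {u : ℝ} (hu : 0 < u) : ∫ x, heatKernel d u x = 1 := by
  simp_rw [heatKernel_eq_gaussian u, integral_const_mul]
  rw [GaussianFourier.integral_rexp_neg_mul_sq_norm (by positivity), finrank_euclideanSpace_fin,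
    div_inv_eq_mul, show Real.pi * (2 * u) = 2 * Real.pi * u by ring,
    ← Real.rpow_add (by positivity), neg_div, neg_add_cancel, Real.rpow_zero]

lemma exists_heatKernel_le_mul_heatKernel {a b : ℝ} (ha : 0 < a) :
    ∃ C, ∀ u ∈ Icc a b, ∀ x : EuclideanSpace ℝ (Fin d),
      heatKernel d u x ≤ C * heatKernel d b x := by
  refine ⟨(2 * Real.pi * a) ^ (-(d : ℝ) / 2) / (2 * Real.pi * b) ^ (-(d : ℝ) / 2),
    fun u ⟨hau, hub⟩ x => ?_⟩
  have hu : 0 < u := ha.trans_le hau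
  have hb : 0 < b := hu.trans_le hub
  rw [heatKernel, heatKernel, ← mul_assoc,
    div_mul_cancel₀ _ (Real.rpow_pos_of_pos (by positivity) _).ne']
  refine mul_le_mul ?_ ?_ (by positivity) (by positivity)
  · have hd : -(d : ℝ) / 2 ≤ 0 := by
      rw [neg_div, neg_nonpos]
      positivity
    exact Real.rpow_le_rpow_of_nonpos (by positivity) (by gcongr) hd
  · rw [Real.exp_le_exp, neg_div, neg_div, neg_le_neg_iff]
    gcongr

end HeatKernel

section HeatConv

variable {d : ℕ} {F : Type*} [NormedAddCommGroup F] [NormedSpace ℝ F]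

-- `P_u g` for `u > 0`, also for vector-valued `g` (it is applied to `fderiv ℝ g`).
noncomputable def heatConv (d : ℕ) (u : ℝ) (g : EuclideanSpace ℝ (Fin d) → F)
    (x : EuclideanSpace ℝ (Fin d)) : F :=
  ∫ y, heatKernel d u y • g (x - y)

lemma heatSemigroup_eq_heatConv {u : ℝ} (hu : 0 < u) (g : EuclideanSpace ℝ (Fin d) → ℝ) :
    heatSemigroup d u g = heatConv d u g := by
  ext x
  rw [heatSemigroup, if_neg hu.ne', heatConv,
    ← integral_sub_left_eq_self (fun y => heatKernel d u y • g (x - y)) volume x]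
  simp

lemma norm_heatKernel_smul_le {u M : ℝ} (hu : 0 < u) {v : F} (hv : ‖v‖ ≤ M)
    (y : EuclideanSpace ℝ (Fin d)) : ‖heatKernel d u y • v‖ ≤ M * heatKernel d u y := by
  rw [norm_smul, Real.norm_of_nonneg (heatKernel_nonneg hu y), mul_comm]
  exact mul_le_mul_of_nonneg_right hv (heatKernel_nonneg hu y)

lemma integrable_heatKernel_smul {u M : ℝ} (hu : 0 < u) {g : EuclideanSpace ℝ (Fin d) → F}
    (hgm : StronglyMeasurable g) (hg : ∀ x, ‖g x‖ ≤ M) (x : EuclideanSpace ℝ (Fin d)) :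
    Integrable (fun y => heatKernel d u y • g (x - y)) :=
  ((integrable_heatKernel hu).const_mul M).mono'
    ((continuous_heatKernel u).stronglyMeasurable.smul
      (hgm.comp_measurable (measurable_const.sub measurable_id))).aestronglyMeasurable
    (Eventually.of_forall fun y => norm_heatKernel_smul_le hu (hg (x - y)) y)

lemma norm_heatConv_le {u M : ℝ} (hu : 0 < u) {g : EuclideanSpace ℝ (Fin d) → F}
    (hg : ∀ x, ‖g x‖ ≤ M) (x : EuclideanSpace ℝ (Fin d)) :
    ‖heatConv d u g x‖ ≤ M := by
  calc ‖heatConv d u g x‖ ≤ ∫ y, M * heatKernel d u y :=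
        norm_integral_le_of_norm_le ((integrable_heatKernel hu).const_mul M)
          (Eventually.of_forall fun y => norm_heatKernel_smul_le hu (hg (x - y)) y)
    _ = M := by rw [integral_const_mul, integral_heatKernel hu, mul_one]

lemma norm_heatConv_sub_le {u M C γ : ℝ} (hu : 0 < u) {g : EuclideanSpace ℝ (Fin d) → F}
    (hgm : StronglyMeasurable g) (hg : ∀ x, ‖g x‖ ≤ M)
    (hC : ∀ x y, ‖g x - g y‖ ≤ C * ‖x - y‖ ^ γ) (x z : EuclideanSpace ℝ (Fin d)) :
    ‖heatConv d u g x - heatConv d u g z‖ ≤ C * ‖x - z‖ ^ γ := by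
  have hdiff : ∀ y, ‖g (x - y) - g (z - y)‖ ≤ C * ‖x - z‖ ^ γ := fun y => by
    simpa only [sub_sub_sub_cancel_right] using hC (x - y) (z - y)
  rw [heatConv, heatConv, ← integral_sub (integrable_heatKernel_smul hu hgm hg x)
    (integrable_heatKernel_smul hu hgm hg z)]
  simp_rw [← smul_sub]
  calc ‖∫ y, heatKernel d u y • (g (x - y) - g (z - y))‖
      ≤ ∫ y, C * ‖x - z‖ ^ γ * heatKernel d u y :=
        norm_integral_le_of_norm_le ((integrable_heatKernel hu).const_mul _)
          (Eventually.of_forall fun y => norm_heatKernel_smul_le hu (hdiff y) y)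
    _ = C * ‖x - z‖ ^ γ := by rw [integral_const_mul, integral_heatKernel hu, mul_one]

lemma hasFDerivAt_heatConv {u M M' : ℝ} (hu : 0 < u) {g : EuclideanSpace ℝ (Fin d) → ℝ}
    (hg : Differentiable ℝ g) (hgb : ∀ x, ‖g x‖ ≤ M) (hg' : ∀ x, ‖fderiv ℝ g x‖ ≤ M')
    (x₀ : EuclideanSpace ℝ (Fin d)) :
    HasFDerivAt (heatConv d u g) (heatConv d u (fderiv ℝ g) x₀) x₀ := by
  have hgm : StronglyMeasurable g := hg.continuous.stronglyMeasurable
  have hg'm : StronglyMeasurable (fderiv ℝ g) := (measurable_fderiv ℝ g).stronglyMeasurable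
  unfold heatConv
  refine hasFDerivAt_integral_of_dominated_of_fderiv_le univ_mem
    (F := fun x y => heatKernel d u y • g (x - y))
    (F' := fun x y => heatKernel d u y • fderiv ℝ g (x - y))
    (bound := fun y => M' * heatKernel d u y)
    (Eventually.of_forall fun x => (integrable_heatKernel_smul hu hgm hgb x).aestronglyMeasurable)
    (integrable_heatKernel_smul hu hgm hgb x₀)
    (integrable_heatKernel_smul hu hg'm hg' x₀).aestronglyMeasurable
    (Eventually.of_forall fun y x _ => norm_heatKernel_smul_le hu (hg' (x - y)) y)
    ((integrable_heatKernel hu).const_mul M')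
    (Eventually.of_forall fun y x _ => ?_)
  exact ((hg (x - y)).hasFDerivAt.comp x ((hasFDerivAt_id x).sub_const y)).const_smul
    (heatKernel d u y)

lemma continuousOn_heatConv_sub {G : ℝ → EuclideanSpace ℝ (Fin d) → F} {t T M : ℝ}
    (hGm : ∀ s ∈ Ioc t T, StronglyMeasurable (G s)) (hGb : ∀ s ∈ Ioc t T, ∀ y, ‖G s y‖ ≤ M)
    (hGc : ∀ y, ContinuousOn (fun s => G s y) (Ioc t T)) (x : EuclideanSpace ℝ (Fin d)) :
    ContinuousOn (fun s => heatConv d (s - t) (G s) x) (Ioc t T) := by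
  intro s₀ hs₀
  have ha : 0 < (s₀ - t) / 2 := by linarith [hs₀.1]
  have hM : 0 ≤ M := (norm_nonneg _).trans (hGb s₀ hs₀ x)
  obtain ⟨C, hC⟩ := exists_heatKernel_le_mul_heatKernel (d := d) (b := T - t) ha
  have hnear : ∀ᶠ s in 𝓝[Ioc t T] s₀, s ∈ Ioc t T ∧ s - t ∈ Icc ((s₀ - t) / 2) (T - t) := by
    filter_upwards [self_mem_nhdsWithin, mem_nhdsWithin_of_mem_nhds
      (Ioi_mem_nhds (show (s₀ + t) / 2 < s₀ by linarith [hs₀.1]))] with s hs hs'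
    exact ⟨hs, by linarith [mem_Ioi.1 hs'], by linarith [hs.2]⟩
  refine tendsto_integral_filter_of_dominated_convergence
    (fun y => M * (C * heatKernel d (T - t) y)) ?_ ?_ ?_ ?_
  · filter_upwards [hnear] with s hs
    exact (integrable_heatKernel_smul (ha.trans_le hs.2.1) (hGm s hs.1) (hGb s hs.1)
      x).aestronglyMeasurable
  · filter_upwards [hnear] with s hs
    exact Eventually.of_forall fun y =>
      (norm_heatKernel_smul_le (ha.trans_le hs.2.1) (hGb s hs.1 (x - y)) y).trans
        (mul_le_mul_of_nonneg_left (hC _ hs.2 y) hM)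
  · exact ((integrable_heatKernel (by linarith [hs₀.1, hs₀.2])).const_mul C).const_mul M
  · refine Eventually.of_forall fun y => ?_
    have hK : ContinuousWithinAt (fun s => heatKernel d (s - t) y) (Ioc t T) s₀ :=
      (continuousAt_heatKernel_time (by linarith [hs₀.1]) y).comp_continuousWithinAt
        (continuousWithinAt_id.sub continuousWithinAt_const)
    exact hK.smul (hGc (x - y) s₀ hs₀)

end HeatConv

structure C1HolderBound {E : Type*} [NormedAddCommGroup E] [NormedSpace ℝ E]
    (α M : ℝ) (f : E → ℝ) : Prop where
  differentiable : Differentiable ℝ f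
  norm_le : ∀ x, ‖f x‖ ≤ M
  norm_fderiv_le : ∀ x, ‖fderiv ℝ f x‖ ≤ M
  norm_fderiv_sub_le : ∀ x y, ‖fderiv ℝ f x - fderiv ℝ f y‖ ≤ M * ‖x - y‖ ^ α

namespace C1HolderBound

variable {E : Type*} [NormedAddCommGroup E] [NormedSpace ℝ E] {α M N : ℝ} {f g : E → ℝ}

lemma nonneg (hf : C1HolderBound α M f) : 0 ≤ M :=
  (norm_nonneg _).trans (hf.norm_le 0)

lemma sub (hf : C1HolderBound α M f) (hg : C1HolderBound α N g) :
    C1HolderBound α (M + N) (fun x => f x - g x) where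
  differentiable := hf.differentiable.sub hg.differentiable
  norm_le x := (norm_sub_le _ _).trans (add_le_add (hf.norm_le x) (hg.norm_le x))
  norm_fderiv_le x := by
    rw [fderiv_fun_sub (hf.differentiable x) (hg.differentiable x)]
    exact (norm_sub_le _ _).trans (add_le_add (hf.norm_fderiv_le x) (hg.norm_fderiv_le x))
  norm_fderiv_sub_le x y := by
    rw [fderiv_fun_sub (hf.differentiable x) (hg.differentiable x),
      fderiv_fun_sub (hf.differentiable y) (hg.differentiable y), sub_sub_sub_comm, add_mul]
    exact (norm_sub_le _ _).trans
      (add_le_add (hf.norm_fderiv_sub_le x y) (hg.norm_fderiv_sub_le x y))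

theorem integral {Ω : Type*} [MeasurableSpace Ω] {μ : Measure Ω} [IsFiniteMeasure μ]
    {F : Ω → E → ℝ} (hF : ∀ᵐ ω ∂μ, C1HolderBound α M (F ω))
    (hFm : ∀ x, AEStronglyMeasurable (fun ω => F ω x) μ)
    (hF'm : ∀ x, AEStronglyMeasurable (fun ω => fderiv ℝ (F ω) x) μ) :
    C1HolderBound α (M * μ.real univ) (fun x => ∫ ω, F ω x ∂μ) := by
  have hF'int : ∀ x, Integrable (fun ω => fderiv ℝ (F ω) x) μ := fun x =>
    .of_bound (hF'm x) M (hF.mono fun ω h => h.norm_fderiv_le x)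
  have hderiv : ∀ x₀, HasFDerivAt (fun x => ∫ ω, F ω x ∂μ) (∫ ω, fderiv ℝ (F ω) x₀ ∂μ) x₀ :=
    fun x₀ => hasFDerivAt_integral_of_dominated_of_fderiv_le univ_mem
      (F := fun x ω => F ω x) (F' := fun x ω => fderiv ℝ (F ω) x) (bound := fun _ => M)
      (Eventually.of_forall hFm) (.of_bound (hFm x₀) M (hF.mono fun ω h => h.norm_le x₀))
      (hF'm x₀) (hF.mono fun ω h x _ => h.norm_fderiv_le x) (integrable_const M)
      (hF.mono fun ω h x _ => (h.differentiable x).hasFDerivAt)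
  refine ⟨fun x => (hderiv x).differentiableAt, fun x => ?_, fun x => ?_, fun x y => ?_⟩
  · exact norm_integral_le_of_norm_le_const (hF.mono fun ω h => h.norm_le x)
  · rw [(hderiv x).fderiv]
    exact norm_integral_le_of_norm_le_const (hF.mono fun ω h => h.norm_fderiv_le x)
  · rw [(hderiv x).fderiv, (hderiv y).fderiv, ← integral_sub (hF'int x) (hF'int y),
      mul_right_comm]
    exact norm_integral_le_of_norm_le_const (hF.mono fun ω h => h.norm_fderiv_sub_le x y)

theorem heatConv {d : ℕ} {u : ℝ} {g : EuclideanSpace ℝ (Fin d) → ℝ}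
    (hg : C1HolderBound α M g) (hu : 0 < u) : C1HolderBound α M (heatConv d u g) := by
  have hderiv := hasFDerivAt_heatConv hu hg.differentiable hg.norm_le hg.norm_fderiv_le
  have hg'm : StronglyMeasurable (fderiv ℝ g) := (measurable_fderiv ℝ g).stronglyMeasurable
  refine ⟨fun x => (hderiv x).differentiableAt, norm_heatConv_le hu hg.norm_le, fun x => ?_,
    fun x y => ?_⟩
  · rw [(hderiv x).fderiv]
    exact norm_heatConv_le hu hg.norm_fderiv_le x
  · rw [(hderiv x).fderiv, (hderiv y).fderiv]
    exact norm_heatConv_sub_le hu hg'm hg.norm_fderiv_le hg.norm_fderiv_sub_le x y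

end C1HolderBound

section Gradient

variable {E : Type*} [NormedAddCommGroup E] [InnerProductSpace ℝ E] [CompleteSpace E]

lemma norm_gradient (f : E → ℝ) (x : E) : ‖gradient f x‖ = ‖fderiv ℝ f x‖ := by
  rw [gradient, LinearIsometryEquiv.norm_map]

lemma norm_gradient_sub (f : E → ℝ) (x y : E) :
    ‖gradient f x - gradient f y‖ = ‖fderiv ℝ f x - fderiv ℝ f y‖ := by
  rw [gradient, gradient, ← map_sub, LinearIsometryEquiv.norm_map]

def IsC1Holder (α : ℝ) (f : E → ℝ) : Prop :=
  (∃ C, ∀ x, |f x| ≤ C) ∧ Differentiable ℝ f ∧ (∃ C, ∀ x, ‖gradient f x‖ ≤ C) ∧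
    (∃ C, ∀ x y, ‖gradient f x - gradient f y‖ ≤ C * ‖x - y‖ ^ α)

lemma C1HolderBound.isC1Holder {α M : ℝ} {f : E → ℝ} (hf : C1HolderBound α M f) :
    IsC1Holder α f :=
  ⟨⟨M, fun x => (Real.norm_eq_abs _).symm.trans_le (hf.norm_le x)⟩, hf.differentiable,
    ⟨M, fun x => (norm_gradient f x).trans_le (hf.norm_fderiv_le x)⟩,
    ⟨M, fun x y => (norm_gradient_sub f x y).trans_le (hf.norm_fderiv_sub_le x y)⟩⟩

end Gradient

section HolderNorms

variable {E F : Type*} [NormedAddCommGroup F] {g : E → F} {C γ : ℝ}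

lemma supNorm_nonneg (g : E → F) : 0 ≤ supNorm g :=
  Real.iSup_nonneg fun _ => norm_nonneg _

lemma holderSem_nonneg [NormedAddCommGroup E] (γ : ℝ) (g : E → F) : 0 ≤ holderSem γ g :=
  Real.sSup_nonneg <| by
    rintro r ⟨x, y, -, rfl⟩
    positivity

lemma norm_le_supNorm (hC : ∀ x, ‖g x‖ ≤ C) (x : E) : ‖g x‖ ≤ supNorm g :=
  le_ciSup ⟨C, by rintro r ⟨x, rfl⟩; exact hC x⟩ x

lemma supNorm_le (hC : ∀ x, ‖g x‖ ≤ C) (h0 : 0 ≤ C) : supNorm g ≤ C :=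
  Real.iSup_le hC h0

lemma norm_sub_le_holderSem_mul [NormedAddCommGroup E]
    (hC : ∀ x y, ‖g x - g y‖ ≤ C * ‖x - y‖ ^ γ) (x y : E) :
    ‖g x - g y‖ ≤ holderSem γ g * ‖x - y‖ ^ γ := by
  rcases eq_or_ne x y with rfl | hxy
  · simpa using mul_nonneg (holderSem_nonneg γ g) (Real.rpow_nonneg le_rfl γ)
  have hpos : ∀ {a b : E}, a ≠ b → 0 < ‖a - b‖ ^ γ := fun hab =>
    Real.rpow_pos_of_pos (norm_pos_iff.2 (sub_ne_zero.2 hab)) γ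
  rw [← div_le_iff₀ (hpos hxy)]
  refine le_csSup ⟨C, ?_⟩ ⟨x, y, hxy, rfl⟩
  rintro r ⟨a, b, hab, rfl⟩
  exact (div_le_iff₀ (hpos hab)).2 (hC a b)

lemma holderSem_le [NormedAddCommGroup E] (hC : ∀ x y, ‖g x - g y‖ ≤ C * ‖x - y‖ ^ γ) (h0 : 0 ≤ C) :
    holderSem γ g ≤ C := by
  refine Real.sSup_le ?_ h0
  rintro r ⟨a, b, hab, rfl⟩
  exact div_le_of_le_mul₀ (Real.rpow_nonneg (norm_nonneg _) γ) h0 (hC a b)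

end HolderNorms

section C1aNorm

variable {d : ℕ} {α M : ℝ} {f : EuclideanSpace ℝ (Fin d) → ℝ}

lemma abs_le_c1aNorm (hf : ∃ C, ∀ x, |f x| ≤ C) (x : EuclideanSpace ℝ (Fin d)) :
    |f x| ≤ c1aNorm d α f := by
  obtain ⟨C, hC⟩ := hf
  have := norm_le_supNorm (g := f) (C := C) hC x
  have := supNorm_nonneg (gradient f)
  have := holderSem_nonneg α (gradient f)
  rw [c1aNorm, ← Real.norm_eq_abs]
  linarith

lemma norm_fderiv_le_c1aNorm (hf : ∃ C, ∀ x, ‖gradient f x‖ ≤ C)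
    (x : EuclideanSpace ℝ (Fin d)) : ‖fderiv ℝ f x‖ ≤ c1aNorm d α f := by
  obtain ⟨C, hC⟩ := hf
  have := norm_le_supNorm hC x
  have := supNorm_nonneg f
  have := holderSem_nonneg α (gradient f)
  rw [c1aNorm, ← norm_gradient]
  linarith

lemma norm_fderiv_sub_le_c1aNorm_mul
    (hf : ∃ C, ∀ x y, ‖gradient f x - gradient f y‖ ≤ C * ‖x - y‖ ^ α)
    (x y : EuclideanSpace ℝ (Fin d)) :
    ‖fderiv ℝ f x - fderiv ℝ f y‖ ≤ c1aNorm d α f * ‖x - y‖ ^ α := by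
  obtain ⟨C, hC⟩ := hf
  have hsem : holderSem α (gradient f) ≤ c1aNorm d α f := by
    have := supNorm_nonneg f
    have := supNorm_nonneg (gradient f)
    rw [c1aNorm]
    linarith
  rw [← norm_gradient_sub]
  exact (norm_sub_le_holderSem_mul hC x y).trans
    (mul_le_mul_of_nonneg_right hsem (Real.rpow_nonneg (norm_nonneg _) α))

lemma C1HolderBound.of_c1aNorm_le (hf : IsC1Holder α f) (hM : c1aNorm d α f ≤ M) :
    C1HolderBound α M f :=
  ⟨hf.2.1, fun x => (Real.norm_eq_abs _).trans_le ((abs_le_c1aNorm hf.1 x).trans hM),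
    fun x => (norm_fderiv_le_c1aNorm hf.2.2.1 x).trans hM,
    fun x y => (norm_fderiv_sub_le_c1aNorm_mul hf.2.2.2 x y).trans
      (mul_le_mul_of_nonneg_right hM (Real.rpow_nonneg (norm_nonneg _) α))⟩

lemma C1HolderBound.c1aNorm_le (hf : C1HolderBound α M f) : c1aNorm d α f ≤ 3 * M := by
  have h₁ := supNorm_le hf.norm_le hf.nonneg
  have h₂ := supNorm_le (g := gradient f)
    (fun x => (norm_gradient f x).trans_le (hf.norm_fderiv_le x)) hf.nonneg
  have h₃ := holderSem_le (g := gradient f)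
    (fun x y => (norm_gradient_sub f x y).trans_le (hf.norm_fderiv_sub_le x y)) hf.nonneg
  rw [c1aNorm]
  linarith

lemma continuousOn_of_tendsto_c1aNorm_sub {X : Type*} [TopologicalSpace X] {S : Set X}
    {f : X → EuclideanSpace ℝ (Fin d) → ℝ} (hf : ∀ s ∈ S, C1HolderBound α M (f s))
    (hcont : ∀ s₀ ∈ S,
      Tendsto (fun s => c1aNorm d α (fun x => f s x - f s₀ x)) (𝓝[S] s₀) (𝓝 0))
    (x : EuclideanSpace ℝ (Fin d)) :
    ContinuousOn (fun s => f s x) S ∧ ContinuousOn (fun s => fderiv ℝ (f s) x) S := by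
  have hwithin : ∀ s₀ ∈ S, ContinuousWithinAt (fun s => f s x) S s₀ ∧
      ContinuousWithinAt (fun s => fderiv ℝ (f s) x) S s₀ := by
    intro s₀ hs₀
    constructor <;> rw [ContinuousWithinAt, tendsto_iff_norm_sub_tendsto_zero] <;>
      refine squeeze_zero' (Eventually.of_forall fun _ => norm_nonneg _) ?_ (hcont s₀ hs₀) <;>
      filter_upwards [self_mem_nhdsWithin] with s hs
    · exact abs_le_c1aNorm ((hf s hs).sub (hf s₀ hs₀)).isC1Holder.1 x
    · rw [← fderiv_fun_sub ((hf s hs).differentiable x) ((hf s₀ hs₀).differentiable x)]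
      exact norm_fderiv_le_c1aNorm ((hf s hs).sub (hf s₀ hs₀)).isC1Holder.2.2.1 x
  exact ⟨fun s hs => (hwithin s hs).1, fun s hs => (hwithin s hs).2⟩

end C1aNorm

theorem c1HolderBound_setIntegral_heatConv {d : ℕ} {α M t T : ℝ}
    {h : ℝ → EuclideanSpace ℝ (Fin d) → ℝ} (htT : t ≤ T)
    (hh : ∀ s ∈ Ioc t T, C1HolderBound α M (h s))
    (hcont : ∀ y, ContinuousOn (fun s => h s y) (Ioc t T) ∧
      ContinuousOn (fun s => fderiv ℝ (h s) y) (Ioc t T)) :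
    C1HolderBound α (M * (T - t)) (fun x => ∫ s in Ioc t T, heatConv d (s - t) (h s) x) := by
  have hK : ∀ s ∈ Ioc t T, C1HolderBound α M (heatConv d (s - t) (h s)) := fun s hs =>
    (hh s hs).heatConv (sub_pos.2 hs.1)
  have hKcont : ∀ x, ContinuousOn (fun s => heatConv d (s - t) (h s) x) (Ioc t T) :=
    continuousOn_heatConv_sub (fun s hs => (hh s hs).differentiable.continuous.stronglyMeasurable)
      (fun s hs => (hh s hs).norm_le) (fun y => (hcont y).1)
  have hK'cont : ∀ x,
      ContinuousOn (fun s => fderiv ℝ (heatConv d (s - t) (h s)) x) (Ioc t T) := fun x =>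
    (continuousOn_heatConv_sub (G := fun s => fderiv ℝ (h s))
      (fun s _ => (measurable_fderiv ℝ _).stronglyMeasurable)
      (fun s hs => (hh s hs).norm_fderiv_le) (fun y => (hcont y).2) x).congr
      fun s hs => (hasFDerivAt_heatConv (sub_pos.2 hs.1) (hh s hs).differentiable
        (hh s hs).norm_le (hh s hs).norm_fderiv_le x).fderiv
  have := C1HolderBound.integral (μ := volume.restrict (Ioc t T))
    ((ae_restrict_mem measurableSet_Ioc).mono hK)
    (fun x => (hKcont x).aestronglyMeasurable measurableSet_Ioc)
    (fun x => (hK'cont x).aestronglyMeasurable measurableSet_Ioc)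
  rwa [measureReal_restrict_apply_univ, Real.volume_real_Ioc_of_le htT] at this

theorem stmt_9_general (d : ℕ) (α : ℝ) (T : ℝ) :
    ∃ c : ℝ, 0 < c ∧
      ∀ (h : ℝ → EuclideanSpace ℝ (Fin d) → ℝ) (M : ℝ),
        (∀ s ∈ Set.Icc (0 : ℝ) T,
          (∃ C, ∀ x, |h s x| ≤ C) ∧ Differentiable ℝ (h s) ∧
          (∃ C, ∀ x, ‖gradient (h s) x‖ ≤ C) ∧
          (∃ C, ∀ x y, ‖gradient (h s) x - gradient (h s) y‖ ≤ C * ‖x - y‖ ^ α)) →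
        (∀ s₀ ∈ Set.Icc (0 : ℝ) T, Filter.Tendsto
          (fun s => c1aNorm d α (fun x => h s x - h s₀ x))
          (nhdsWithin s₀ (Set.Icc (0 : ℝ) T)) (nhds 0)) →
        (∀ s ∈ Set.Icc (0 : ℝ) T, c1aNorm d α (h s) ≤ M) →
        ∀ v : ℝ → EuclideanSpace ℝ (Fin d) → ℝ,
          (∀ t x, v t x = ∫ s in t..T, heatSemigroup d (s - t) (h s) x) →
          ∀ t ∈ Set.Icc (0 : ℝ) T,
            (∃ C, ∀ x, |v t x| ≤ C) ∧ Differentiable ℝ (v t) ∧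
            (∃ C, ∀ x, ‖gradient (v t) x‖ ≤ C) ∧
            (∃ C, ∀ x y, ‖gradient (v t) x - gradient (v t) y‖ ≤ C * ‖x - y‖ ^ α) ∧
            c1aNorm d α (v t) ≤ c * T * M := by
  refine ⟨3, by norm_num, fun h M hreg hcont hbnd v hv t ht => ?_⟩
  have hh : ∀ s ∈ Icc (0 : ℝ) T, C1HolderBound α M (h s) := fun s hs =>
    .of_c1aNorm_le (hreg s hs) (hbnd s hs)
  have hsub : Ioc t T ⊆ Icc 0 T := fun s hs => ⟨ht.1.trans hs.1.le, hs.2⟩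
  have hvt : v t = fun x => ∫ s in Ioc t T, heatConv d (s - t) (h s) x := funext fun x => by
    rw [hv, intervalIntegral.integral_of_le ht.2]
    exact setIntegral_congr_fun measurableSet_Ioc fun s hs => by
      rw [heatSemigroup_eq_heatConv (sub_pos.2 hs.1)]
  have hvb : C1HolderBound α (M * (T - t)) (v t) :=
    hvt ▸ c1HolderBound_setIntegral_heatConv ht.2 (fun s hs => hh s (hsub hs)) fun y =>
      (continuousOn_of_tendsto_c1aNorm_sub hh hcont y).imp (·.mono hsub) (·.mono hsub)
  obtain ⟨hb, hdiff, hgrad, hhol⟩ := hvb.isC1Holder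
  refine ⟨hb, hdiff, hgrad, hhol, hvb.c1aNorm_le.trans ?_⟩
  nlinarith [(hh t ht).nonneg, ht.1]

/-- There is a constant `c > 0` (depending only on `d`, `α`, `T`) such that
for every map `h : [0,T] → C^{1+α}` (bounded differentiable functions with bounded
`α`-Hölder gradient), continuous in the `C^{1+α}` norm and with
`sup_{s ∈ [0,T]} ‖h(s,·)‖_{C^{1+α}} ≤ M`, the function
`v(t,x) = ∫_t^T (P_{s−t} h(s,·))(x) ds` satisfies `v(t,·) ∈ C^{1+α}` for every
`t ∈ [0,T]` and `sup_{t ∈ [0,T]} ‖v(t,·)‖_{C^{1+α}} ≤ c T M`. -/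
theorem stmt_9 (d : ℕ) (hd : 1 ≤ d) (α : ℝ) (hα : α ∈ Set.Ioo (0 : ℝ) 1)
    (T : ℝ) (hT : 0 < T) :
    ∃ c : ℝ, 0 < c ∧
      ∀ (h : ℝ → EuclideanSpace ℝ (Fin d) → ℝ) (M : ℝ),
        (∀ s ∈ Set.Icc (0 : ℝ) T,
          (∃ C, ∀ x, |h s x| ≤ C) ∧ Differentiable ℝ (h s) ∧
          (∃ C, ∀ x, ‖gradient (h s) x‖ ≤ C) ∧
          (∃ C, ∀ x y, ‖gradient (h s) x - gradient (h s) y‖ ≤ C * ‖x - y‖ ^ α)) →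
        (∀ s₀ ∈ Set.Icc (0 : ℝ) T, Filter.Tendsto
          (fun s => c1aNorm d α (fun x => h s x - h s₀ x))
          (nhdsWithin s₀ (Set.Icc (0 : ℝ) T)) (nhds 0)) →
        (∀ s ∈ Set.Icc (0 : ℝ) T, c1aNorm d α (h s) ≤ M) →
        ∀ v : ℝ → EuclideanSpace ℝ (Fin d) → ℝ,
          (∀ t x, v t x = ∫ s in t..T, heatSemigroup d (s - t) (h s) x) →
          ∀ t ∈ Set.Icc (0 : ℝ) T,
            (∃ C, ∀ x, |v t x| ≤ C) ∧ Differentiable ℝ (v t) ∧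
            (∃ C, ∀ x, ‖gradient (v t) x‖ ≤ C) ∧
            (∃ C, ∀ x y, ‖gradient (v t) x - gradient (v t) y‖ ≤ C * ‖x - y‖ ^ α) ∧
            c1aNorm d α (v t) ≤ c * T * M :=
  stmt_9_general d α T
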